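/- arXiv:1002.2487 — 3 statements merged into one kernel-verified Lean document; each statement's English description precedes it below -/
import Mathlib

section
/- Fix 0 < α < 1/2 with normal α-quantile z_α, and c ≥ 0 with |z_α| ≥ 2c. Define ψ(ρ,u) = c·ρ·u² + ln F_α(|z_α| + ρu) for ρ ≥ 0 and 0 ≤ u ≤ 1, where F_α(z) = (∫_z^∞ e^{-t²/2} dt)/(∫_{|z_α|}^∞ e^{-t²/2} dt). Then for every fixed ρ > 0, the function u ↦ ψ(ρ,u) is strictly decreasing on [0,1]. -/
/-!
Write `G(x) = ∫_x^∞ e^{-t²/2} dt`, so that `ψ(ρ,u) = cρu² + log G(|z_α| + ρu) - log G(|z_α|)`.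
Since `G' = -e^{-x²/2}`, the `u`-derivative of `ψ` is `ρ (2cu - e^{-x²/2} / G(x))` at `x = |z_α| + ρu`.
The Gaussian tail bound `x G(x) < e^{-x²/2}`, which comes from `e^{-x²/2} = ∫_x^∞ t e^{-t²/2} dt`,
makes this smaller than `ρ (2cu - x) ≤ 0`, because `2cu ≤ |z_α| u ≤ |z_α|`.
-/

open MeasureTheory Real Set Filter

lemma integral_Ioi_pos_of_pos {f : ℝ → ℝ} {x : ℝ} (hf : IntegrableOn f (Ioi x))
    (hpos : ∀ t ∈ Ioi x, 0 < f t) : 0 < ∫ t in Ioi x, f t := by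
  rw [setIntegral_pos_iff_support_of_nonneg_ae
    ((ae_restrict_mem measurableSet_Ioi).mono fun t ht => (hpos t ht).le) hf,
    inter_eq_right.mpr fun t ht => Function.mem_support.mpr (hpos t ht).ne', volume_Ioi]
  exact ENNReal.zero_lt_top

lemma hasDerivAt_integral_Ioi {f : ℝ → ℝ} {x : ℝ} (hf : Integrable f) (hcont : Continuous f) :
    HasDerivAt (fun y => ∫ t in Ioi y, f t) (-f x) x := by
  have hsplit : ∀ y, ∫ t in Ioi y, f t = (∫ t in Ioi 0, f t) - ∫ t in (0 : ℝ)..y, f t :=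
    fun y => by rw [← intervalIntegral.integral_Ioi_sub_Ioi' hf.integrableOn hf.integrableOn,
      sub_sub_cancel]
  have hright : HasDerivAt (fun y => ∫ t in (0 : ℝ)..y, f t) (f x) x :=
    intervalIntegral.integral_hasDerivAt_right hf.intervalIntegrable
      (hcont.stronglyMeasurableAtFilter _ _) hcont.continuousAt
  simpa only [funext hsplit, zero_sub] using hright.const_sub (∫ t in Ioi 0, f t)

lemma integrable_exp_neg_sq_div_two : Integrable fun t : ℝ => exp (-t ^ 2 / 2) := by
  convert integrable_exp_neg_mul_sq (b := 1 / 2) (by norm_num) using 3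
  ring

lemma integrable_mul_exp_neg_sq_div_two : Integrable fun t : ℝ => t * exp (-t ^ 2 / 2) := by
  convert integrable_mul_exp_neg_mul_sq (b := 1 / 2) (by norm_num) using 4
  ring

lemma integral_Ioi_mul_exp_neg_sq_div_two (x : ℝ) :
    ∫ t in Ioi x, t * exp (-t ^ 2 / 2) = exp (-x ^ 2 / 2) := by
  have hderiv : ∀ t ∈ Ici x, HasDerivAt (fun s => -exp (-s ^ 2 / 2)) (t * exp (-t ^ 2 / 2)) t :=
    fun t _ =>
      (((hasDerivAt_pow 2 t).neg.div_const 2).exp.neg).congr_deriv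
        (by simp only [Pi.neg_apply, Nat.cast_ofNat]; ring)
  have hlim : Tendsto (fun s : ℝ => -exp (-s ^ 2 / 2)) atTop (nhds 0) := by
    have hsq : Tendsto (fun s : ℝ => s ^ 2 / 2) atTop atTop :=
      (tendsto_pow_atTop two_ne_zero).atTop_div_const two_pos
    simpa only [Function.comp_def, neg_div, neg_zero] using
      (tendsto_exp_neg_atTop_nhds_zero.comp hsq).neg
  simpa using integral_Ioi_of_hasDerivAt_of_tendsto' hderiv
    integrable_mul_exp_neg_sq_div_two.integrableOn hlim

noncomputable def gaussTail (x : ℝ) : ℝ := ∫ t in Ioi x, exp (-t ^ 2 / 2)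

lemma gaussTail_pos (x : ℝ) : 0 < gaussTail x :=
  integral_Ioi_pos_of_pos integrable_exp_neg_sq_div_two.integrableOn fun _ _ => exp_pos _

lemma hasDerivAt_gaussTail (x : ℝ) : HasDerivAt gaussTail (-exp (-x ^ 2 / 2)) x :=
  hasDerivAt_integral_Ioi integrable_exp_neg_sq_div_two (by fun_prop)

lemma mul_gaussTail_lt_exp (x : ℝ) : x * gaussTail x < exp (-x ^ 2 / 2) := by
  have hint : IntegrableOn (fun t => t * exp (-t ^ 2 / 2) - x * exp (-t ^ 2 / 2)) (Ioi x) :=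
    (integrable_mul_exp_neg_sq_div_two.sub (integrable_exp_neg_sq_div_two.const_mul x)).integrableOn
  have hpos : 0 < ∫ t in Ioi x, (t * exp (-t ^ 2 / 2) - x * exp (-t ^ 2 / 2)) :=
    integral_Ioi_pos_of_pos hint fun t ht => by
      rw [← sub_mul]; exact mul_pos (sub_pos.mpr ht) (exp_pos _)
  rw [integral_sub integrable_mul_exp_neg_sq_div_two.integrableOn
    (integrable_exp_neg_sq_div_two.const_mul x).integrableOn, integral_const_mul,
    integral_Ioi_mul_exp_neg_sq_div_two] at hpos
  exact sub_pos.mp hpos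

lemma lt_exp_div_gaussTail (x : ℝ) : x < exp (-x ^ 2 / 2) / gaussTail x :=
  (lt_div_iff₀ (gaussTail_pos x)).mpr (mul_gaussTail_lt_exp x)

lemma strictAntiOn_mul_sq_add_log_gaussTail {a c ρ : ℝ} (ha : 0 ≤ a) (hca : 2 * c ≤ a)
    (hρ : 0 < ρ) :
    StrictAntiOn (fun u => c * ρ * u ^ 2 + log (gaussTail (a + ρ * u))) (Icc 0 1) := by
  have hderiv : ∀ u, HasDerivAt (fun u => c * ρ * u ^ 2 + log (gaussTail (a + ρ * u)))
      (ρ * (2 * c * u - exp (-(a + ρ * u) ^ 2 / 2) / gaussTail (a + ρ * u))) u := fun u => by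
    have hx := ((hasDerivAt_id u).const_mul ρ).const_add a
    have hlog := ((hasDerivAt_gaussTail _).comp u hx).log (gaussTail_pos _).ne'
    refine (((hasDerivAt_pow 2 u).const_mul (c * ρ)).add hlog).congr_deriv ?_
    simp only [Function.comp_apply, id]
    field_simp
    ring
  refine strictAntiOn_of_hasDerivWithinAt_neg (convex_Icc 0 1)
    (fun u _ => (hderiv u).continuousAt.continuousWithinAt)
    (fun u _ => (hderiv u).hasDerivWithinAt) fun u hu => ?_
  rw [interior_Icc] at hu
  have hcu : 2 * c * u ≤ a + ρ * u := by nlinarith [hu.1, hu.2]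
  exact mul_neg_of_pos_of_neg hρ (sub_neg.mpr (hcu.trans_lt (lt_exp_div_gaussTail _)))

theorem psi_strictAnti_in_u_general
    (c zα : ℝ)
    (hzc : 2 * c ≤ |zα|)
    (ψ : ℝ → ℝ → ℝ)
    (hψ : ∀ ρ u, ψ ρ u = c * ρ * u ^ 2 +
      Real.log ((∫ t in Set.Ioi (|zα| + ρ * u), Real.exp (-t ^ 2 / 2)) /
        (∫ t in Set.Ioi |zα|, Real.exp (-t ^ 2 / 2)))) :
    ∀ ρ : ℝ, 0 < ρ → StrictAntiOn (ψ ρ) (Set.Icc (0 : ℝ) 1) := by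
  intro ρ hρ
  have hψρ : ψ ρ = fun u => c * ρ * u ^ 2 + log (gaussTail (|zα| + ρ * u)) +
      -log (gaussTail |zα|) := by
    funext u
    rw [hψ, ← gaussTail, ← gaussTail, log_div (gaussTail_pos _).ne' (gaussTail_pos _).ne',
      ← sub_eq_add_neg, add_sub_assoc]
  rw [hψρ]
  exact (strictAntiOn_mul_sq_add_log_gaussTail (abs_nonneg zα) hzc hρ).add_const _

/-- For `|z_α| ≥ 2c`, the function `u ↦ ψ(ρ,u) = cρu² + ln F_α(|z_α| + ρu)`
is strictly decreasing on `[0,1]` for every fixed `ρ > 0`. -/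
theorem psi_strictAnti_in_u
    (α c zα : ℝ) (hα0 : 0 < α) (hα1 : α < 1 / 2) (hc : 0 ≤ c)
    (hz : ∫ t in Set.Iic zα, Real.exp (-t ^ 2 / 2) = α * Real.sqrt (2 * Real.pi))
    (hzc : 2 * c ≤ |zα|)
    (ψ : ℝ → ℝ → ℝ)
    (hψ : ∀ ρ u, ψ ρ u = c * ρ * u ^ 2 +
      Real.log ((∫ t in Set.Ioi (|zα| + ρ * u), Real.exp (-t ^ 2 / 2)) /
        (∫ t in Set.Ioi |zα|, Real.exp (-t ^ 2 / 2)))) :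
    ∀ ρ : ℝ, 0 < ρ → StrictAntiOn (ψ ρ) (Set.Icc (0 : ℝ) 1) :=
  psi_strictAnti_in_u_general c zα hzc ψ hψ
end

section
/- Let G : [a,b] → (0,∞) be twice continuously differentiable with G' ≥ 0 and G'' ≤ 0 on [a,b], let ϱ : [a,b] → [0,∞) be continuously differentiable with ϱ' < 0, let c ≥ 0 and γ ∈ (0,1], and define M(ρ) = exp(γ c ρ - γ(1-γ)ρ²/2). If sup_{a ≤ κ ≤ b} |ϱ'(κ)| ≤ G'(b)/(γ c G(b)), then the function κ ↦ M(ϱ(κ)) G(κ) is nondecreasing on [a,b]. -/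
open Real Set

/-!
The derivative of `κ ↦ M(ϱ κ) G κ` is `M(ϱ) (γ ϱ' (c - (1 - γ) ϱ) G + G')`. The part
`-γ (1 - γ) ϱ ϱ' G` is nonnegative, and since `G` increases and `G'` decreases (`G'' ≤ 0`),
`γ c ϱ'(κ) G(κ) + G'(κ) ≥ γ c ϱ'(κ) G(b) + G'(b) ≥ 0` by the bound on `|ϱ'|`.
-/

lemma monotoneOn_of_hasDerivWithinAt_nonneg_of_convex {D : Set ℝ} (hD : Convex ℝ D)
    {f f' : ℝ → ℝ} (hf : ∀ x ∈ D, HasDerivWithinAt f (f' x) D x)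
    (hf' : ∀ x ∈ interior D, 0 ≤ f' x) : MonotoneOn f D :=
  monotoneOn_of_hasDerivWithinAt_nonneg hD (fun x hx => (hf x hx).continuousWithinAt)
    (fun x hx => (hf x (interior_subset hx)).mono interior_subset) hf'

lemma antitoneOn_of_hasDerivWithinAt_nonpos_of_convex {D : Set ℝ} (hD : Convex ℝ D)
    {f f' : ℝ → ℝ} (hf : ∀ x ∈ D, HasDerivWithinAt f (f' x) D x)
    (hf' : ∀ x ∈ interior D, f' x ≤ 0) : AntitoneOn f D :=
  antitoneOn_of_hasDerivWithinAt_nonpos hD (fun x hx => (hf x hx).continuousWithinAt)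
    (fun x hx => (hf x (interior_subset hx)).mono interior_subset) hf'

lemma hasDerivAt_exp_quadratic (γ c ρ : ℝ) :
    HasDerivAt (fun ρ => exp (γ * c * ρ - γ * (1 - γ) * ρ ^ 2 / 2))
      (exp (γ * c * ρ - γ * (1 - γ) * ρ ^ 2 / 2) * (γ * (c - (1 - γ) * ρ))) ρ := by
  have hq := ((hasDerivAt_id' ρ).const_mul (γ * c)).sub
    ((((hasDerivAt_id' ρ).fun_pow 2).const_mul (γ * (1 - γ))).div_const 2)
  exact (hq.congr_deriv (by push_cast; ring)).exp

/-- Here `g, g'` stand for `G, G'` at the current point and `gb, gb'` for their values at `b`. -/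
lemma slope_mul_add_deriv_nonneg {γ c ρ ρ' g g' gb gb' : ℝ} (hγ0 : 0 ≤ γ) (hγ1 : γ ≤ 1)
    (hc : 0 ≤ c) (hρ : 0 ≤ ρ) (hρ' : ρ' ≤ 0) (hg : 0 ≤ g) (hgb : g ≤ gb) (hgb' : 0 ≤ gb')
    (hg' : gb' ≤ g') (hbound : |ρ'| ≤ gb' / (γ * c * gb)) :
    0 ≤ γ * (c - (1 - γ) * ρ) * ρ' * g + g' := by
  have hγc : 0 ≤ γ * c := mul_nonneg hγ0 hc
  have hbound' : -ρ' * (γ * c * gb) ≤ gb' := by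
    rw [← abs_of_nonpos hρ']
    exact mul_le_of_le_div₀ hgb' (mul_nonneg hγc (hg.trans hgb)) hbound
  have hquad : 0 ≤ γ * (1 - γ) * ρ * -ρ' * g := by
    have := sub_nonneg.mpr hγ1
    have := neg_nonneg.mpr hρ'
    positivity
  have hlin : γ * c * gb * ρ' ≤ γ * c * g * ρ' :=
    mul_le_mul_of_nonpos_right (mul_le_mul_of_nonneg_left hgb hγc) hρ'
  nlinarith

theorem lemmaA1_monotone_general
    (a b c γ : ℝ) (hc : 0 ≤ c) (hγ0 : 0 < γ) (hγ1 : γ ≤ 1)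
    (G G' G'' ϱ ϱ' : ℝ → ℝ)
    (hGpos : ∀ x ∈ Icc a b, 0 < G x)
    (hGd : ∀ x ∈ Icc a b, HasDerivWithinAt G (G' x) (Icc a b) x)
    (hGdd : ∀ x ∈ Icc a b, HasDerivWithinAt G' (G'' x) (Icc a b) x)
    (hG' : ∀ x ∈ Icc a b, 0 ≤ G' x)
    (hG'' : ∀ x ∈ Icc a b, G'' x ≤ 0)
    (hϱ0 : ∀ x ∈ Icc a b, 0 ≤ ϱ x)
    (hϱd : ∀ x ∈ Icc a b, HasDerivWithinAt ϱ (ϱ' x) (Icc a b) x)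
    (hϱ' : ∀ x ∈ Icc a b, ϱ' x < 0)
    (hbound : ∀ κ ∈ Icc a b, |ϱ' κ| ≤ G' b / (γ * c * G b))
    (M : ℝ → ℝ)
    (hM : ∀ ρ, M ρ = Real.exp (γ * c * ρ - γ * (1 - γ) * ρ ^ 2 / 2)) :
    MonotoneOn (fun κ => M (ϱ κ) * G κ) (Icc a b) := by
  have hGmono : MonotoneOn G (Icc a b) :=
    monotoneOn_of_hasDerivWithinAt_nonneg_of_convex (convex_Icc a b) hGd
      fun x hx => hG' x (interior_subset hx)
  have hG'anti : AntitoneOn G' (Icc a b) :=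
    antitoneOn_of_hasDerivWithinAt_nonpos_of_convex (convex_Icc a b) hGdd
      fun x hx => hG'' x (interior_subset hx)
  obtain rfl : M = _ := funext hM
  refine monotoneOn_of_hasDerivWithinAt_nonneg_of_convex (convex_Icc a b)
    (fun x hx => ((hasDerivAt_exp_quadratic γ c (ϱ x)).comp_hasDerivWithinAt x
      (hϱd x hx)).mul (hGd x hx)) fun x hx => ?_
  rw [interior_Icc] at hx
  have hx' : x ∈ Icc a b := Ioo_subset_Icc_self hx
  have hb : b ∈ Icc a b := ⟨hx.1.le.trans hx.2.le, le_rfl⟩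
  have hslope := slope_mul_add_deriv_nonneg hγ0.le hγ1 hc (hϱ0 x hx') (hϱ' x hx').le
    (hGpos x hx').le (hGmono hx' hb hx.2.le) (hG' b hb) (hG'anti hx' hb hx.2.le)
    (hbound x hx')
  refine (mul_nonneg (exp_pos (γ * c * ϱ x - γ * (1 - γ) * ϱ x ^ 2 / 2)).le hslope).trans_eq ?_
  simp only [Function.comp_apply]
  ring

/-- Lemma A.1: if `G` is positive, increasing and concave (C²) on `[a,b]`,
`ϱ ≥ 0` is C¹ with negative derivative, `M(ρ) = exp(γcρ - γ(1-γ)ρ²/2)` and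
`sup |ϱ'| ≤ G'(b)/(γ c G(b))`, then `κ ↦ M(ϱ(κ)) G(κ)` is nondecreasing on
`[a,b]`. -/
theorem lemmaA1_monotone
    (a b c γ : ℝ) (hab : a ≤ b) (hc : 0 ≤ c) (hγ0 : 0 < γ) (hγ1 : γ ≤ 1)
    (G G' G'' ϱ ϱ' : ℝ → ℝ)
    (hGpos : ∀ x ∈ Icc a b, 0 < G x)
    (hGd : ∀ x ∈ Icc a b, HasDerivWithinAt G (G' x) (Icc a b) x)
    (hGdd : ∀ x ∈ Icc a b, HasDerivWithinAt G' (G'' x) (Icc a b) x)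
    (hG'cont : ContinuousOn G' (Icc a b))
    (hG''cont : ContinuousOn G'' (Icc a b))
    (hG' : ∀ x ∈ Icc a b, 0 ≤ G' x)
    (hG'' : ∀ x ∈ Icc a b, G'' x ≤ 0)
    (hϱ0 : ∀ x ∈ Icc a b, 0 ≤ ϱ x)
    (hϱd : ∀ x ∈ Icc a b, HasDerivWithinAt ϱ (ϱ' x) (Icc a b) x)
    (hϱ'cont : ContinuousOn ϱ' (Icc a b))
    (hϱ' : ∀ x ∈ Icc a b, ϱ' x < 0)
    (hbound : ∀ κ ∈ Icc a b, |ϱ' κ| ≤ G' b / (γ * c * G b))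
    (M : ℝ → ℝ)
    (hM : ∀ ρ, M ρ = Real.exp (γ * c * ρ - γ * (1 - γ) * ρ ^ 2 / 2)) :
    MonotoneOn (fun κ => M (ϱ κ) * G κ) (Icc a b) :=
  lemmaA1_monotone_general a b c γ hc hγ0 hγ1 G G' G'' ϱ ϱ' hGpos hGd hGdd hG' hG'' hϱ0 hϱd hϱ'
    hbound M hM
end

section
/- Let γ₁ ∈ (0,1), q = 1/(1-γ₁), and let v : [0,T] → [0,∞) be integrable with V_t = ∫_0^t v_u du, and g : [0,T] → (0,∞) continuous. Then ∫_0^T g(t) (e^{-V_t} v_t)^{γ₁} dt ≤ (1 - e^{-V_T})^{γ₁} (∫_0^T g(t)^q dt)^{1/q}. -/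
/-!
Write the integrand as `(e^{-V} v)^{γ₁} (g^q)^{1-γ₁}`, with `1 - γ₁ = 1/q`, and apply Hölder's
inequality in the form `∫ f^a h^b ≤ (∫ f)^a (∫ h)^b` for `a + b = 1`. The first factor is then
computed exactly: `e^{-V}` is absolutely continuous with derivative `-e^{-V} v` almost everywhere
(Lebesgue differentiation), so the fundamental theorem of calculus for absolutely continuous
functions gives `∫_0^T e^{-V_t} v_t dt = 1 - e^{-V_T}`.
-/

open Real MeasureTheory intervalIntegral Set Filter

theorem LipschitzOnWith.comp_absolutelyContinuousOnInterval {X Y : Type*} [PseudoMetricSpace X]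
    [PseudoMetricSpace Y] {f : ℝ → X} {g : X → Y} {K : NNReal} {s : Set X} {a b : ℝ}
    (hg : LipschitzOnWith K g s) (hf : AbsolutelyContinuousOnInterval f a b)
    (hfs : MapsTo f (uIcc a b) s) : AbsolutelyContinuousOnInterval (g ∘ f) a b := by
  have hK := Tendsto.const_mul (K : ℝ) hf
  rw [mul_zero] at hK
  refine squeeze_zero' (Eventually.of_forall fun E => Finset.sum_nonneg fun _ _ => dist_nonneg)
    ?_ hK
  filter_upwards [mem_inf_of_right (mem_principal_self _)] with E hE
  rw [Finset.mul_sum]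
  exact Finset.sum_le_sum fun i hi =>
    hg.dist_le_mul _ (hfs (hE.1 i hi).1) _ (hfs (hE.1 i hi).2)

theorem ContDiff.comp_absolutelyContinuousOnInterval {F : Type*} [NormedAddCommGroup F]
    [NormedSpace ℝ F] {g : ℝ → F} {f : ℝ → ℝ} {a b : ℝ}
    (hg : ContDiff ℝ 1 g) (hf : AbsolutelyContinuousOnInterval f a b) :
    AbsolutelyContinuousOnInterval (g ∘ f) a b := by
  obtain ⟨C, hC⟩ := hf.exists_bound
  obtain ⟨K, hK⟩ :=
    hg.contDiffOn.exists_lipschitzOnWith one_ne_zero (convex_Icc (-C) C) isCompact_Icc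
  exact hK.comp_absolutelyContinuousOnInterval hf fun x hx => abs_le.mp (hC x hx)

theorem integral_exp_neg_primitive_mul {v : ℝ → ℝ} {a b : ℝ}
    (hv : IntervalIntegrable v volume a b) :
    ∫ t in a..b, exp (-∫ u in a..t, v u) * v t = 1 - exp (-∫ u in a..b, v u) := by
  set P := fun t => ∫ u in a..t, v u
  have hF : AbsolutelyContinuousOnInterval (fun t => exp (-P t)) a b :=
    contDiff_exp.comp_absolutelyContinuousOnInterval
      (hv.absolutelyContinuousOnInterval_intervalIntegral left_mem_uIcc).neg
  have hderiv : ∀ᵐ t, t ∈ uIoc a b → deriv (fun t => exp (-P t)) t = -(exp (-P t) * v t) := by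
    filter_upwards [hv.ae_hasDerivAt_integral] with t ht htab
    have hP : HasDerivAt P (v t) t := ht (uIoc_subset_uIcc htab) a left_mem_uIcc
    rw [hP.fun_neg.exp.deriv]
    ring
  have hFTC := hF.integral_deriv_eq_sub
  rw [integral_congr_ae hderiv, intervalIntegral.integral_neg] at hFTC
  simp only [P, integral_same, neg_zero, exp_zero] at hFTC
  linarith

theorem integral_rpow_mul_rpow_le {α : Type*} [MeasurableSpace α] {μ : Measure α} {f g : α → ℝ}
    (hf0 : 0 ≤ᵐ[μ] f) (hg0 : 0 ≤ᵐ[μ] g) (hf : Integrable f μ) (hg : Integrable g μ)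
    {a b : ℝ} (ha : 0 ≤ a) (hb : 0 ≤ b) (hab : a + b = 1) :
    ∫ x, f x ^ a * g x ^ b ∂μ ≤ (∫ x, f x ∂μ) ^ a * (∫ x, g x ∂μ) ^ b := by
  have hfg0 : 0 ≤ᵐ[μ] fun x => f x ^ a * g x ^ b := by
    filter_upwards [hf0, hg0] with x hfx hgx
    exact mul_nonneg (rpow_nonneg hfx a) (rpow_nonneg hgx b)
  have hfg : AEStronglyMeasurable (fun x => f x ^ a * g x ^ b) μ :=
    ((hf.aemeasurable.pow_const a).mul (hg.aemeasurable.pow_const b)).aestronglyMeasurable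
  rw [integral_eq_lintegral_of_nonneg_ae hfg0 hfg, integral_eq_lintegral_of_nonneg_ae hf0
    hf.aestronglyMeasurable, integral_eq_lintegral_of_nonneg_ae hg0 hg.aestronglyMeasurable,
    ENNReal.toReal_rpow, ENNReal.toReal_rpow, ← ENNReal.toReal_mul]
  refine ENNReal.toReal_mono ?_ ?_
  · exact ENNReal.mul_ne_top (ENNReal.rpow_ne_top_of_nonneg ha hf.lintegral_lt_top.ne)
      (ENNReal.rpow_ne_top_of_nonneg hb hg.lintegral_lt_top.ne)
  calc ∫⁻ x, ENNReal.ofReal (f x ^ a * g x ^ b) ∂μ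
      = ∫⁻ x, ENNReal.ofReal (f x) ^ a * ENNReal.ofReal (g x) ^ b ∂μ := by
        refine lintegral_congr_ae ?_
        filter_upwards [hf0, hg0] with x hfx hgx
        rw [ENNReal.ofReal_mul (rpow_nonneg hfx a), ENNReal.ofReal_rpow_of_nonneg hfx ha,
          ENNReal.ofReal_rpow_of_nonneg hgx hb]
    _ ≤ _ := ENNReal.lintegral_mul_norm_pow_le hf.aemeasurable.ennreal_ofReal
        hg.aemeasurable.ennreal_ofReal ha hb hab

/-- Hölder bound for the consumption part of the cost function:
`∫_0^T g_t (e^{-V_t} v_t)^{γ₁} dt ≤ (1 - e^{-V_T})^{γ₁} (∫_0^T g^q)^{1/q}`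
with `q = 1/(1-γ₁)`. -/
theorem consumption_holder_bound
    (T γ₁ : ℝ) (hT : 0 < T) (hγ0 : 0 < γ₁) (hγ1 : γ₁ < 1)
    (q : ℝ) (hq : q = 1 / (1 - γ₁))
    (v : ℝ → ℝ) (hvint : IntervalIntegrable v volume 0 T)
    (hv : ∀ t ∈ Icc (0:ℝ) T, 0 ≤ v t)
    (V : ℝ → ℝ) (hV : ∀ t, V t = ∫ u in (0:ℝ)..t, v u)
    (g : ℝ → ℝ) (hgcont : ContinuousOn g (Icc 0 T))
    (hgpos : ∀ t ∈ Icc (0:ℝ) T, 0 < g t) :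
    (∫ t in (0:ℝ)..T, g t * (Real.exp (-V t) * v t) ^ γ₁) ≤
      (1 - Real.exp (-V T)) ^ γ₁ * (∫ t in (0:ℝ)..T, g t ^ q) ^ (1 / q) := by
  have hq0 : 0 < q := by rw [hq]; exact one_div_pos.2 (sub_pos.2 hγ1)
  have hγq : 1 - γ₁ = 1 / q := by rw [hq, one_div_one_div]
  have hVcont : ContinuousOn V (uIcc 0 T) := by
    rw [funext hV]
    exact (hvint.absolutelyContinuousOnInterval_intervalIntegral left_mem_uIcc).continuousOn
  have hdensity : IntervalIntegrable (fun t => exp (-V t) * v t) volume 0 T :=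
    hvint.continuousOn_mul hVcont.neg.rexp
  have hmass : ∫ t in (0:ℝ)..T, exp (-V t) * v t = 1 - exp (-V T) := by
    simpa only [hV] using integral_exp_neg_primitive_mul hvint
  have hgq : IntervalIntegrable (fun t => g t ^ q) volume 0 T :=
    (hgcont.rpow_const fun _ _ => Or.inr hq0.le).intervalIntegrable_of_Icc hT.le
  have holder := integral_rpow_mul_rpow_le (μ := volume.restrict (Ioc 0 T))
    (ae_restrict_of_forall_mem measurableSet_Ioc fun t ht =>
      mul_nonneg (exp_pos _).le (hv t (Ioc_subset_Icc_self ht)))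
    (ae_restrict_of_forall_mem measurableSet_Ioc fun t ht =>
      rpow_nonneg (hgpos t (Ioc_subset_Icc_self ht)).le q)
    hdensity.1 hgq.1 hγ0.le (sub_nonneg.2 hγ1.le) (add_sub_cancel γ₁ 1)
  rw [← integral_of_le hT.le, ← integral_of_le hT.le, ← integral_of_le hT.le,
    hmass, hγq] at holder
  calc ∫ t in (0:ℝ)..T, g t * (exp (-V t) * v t) ^ γ₁
      = ∫ t in (0:ℝ)..T, (exp (-V t) * v t) ^ γ₁ * (g t ^ q) ^ (1 / q) := by
        refine integral_congr fun t ht => ?_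
        rw [uIcc_of_le hT.le] at ht
        rw [← rpow_mul (hgpos t ht).le, mul_one_div_cancel hq0.ne', rpow_one, mul_comm]
    _ ≤ _ := holder
end
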